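/- Let H be a finite abelian group (written multiplicatively) of odd order, and let q : ℕ → H → ℝ[x,x⁻¹] be such that each q_{j,g} has nonnegative coefficients, Σ_{g∈H} q_{j,g}(1) = 1 for every j, and q_{j,g} = q_{j,g⁻¹} for all j and g (the symmetric case). Suppose that for every maximal proper subgroup K of H the series Σ_j (Σ_{g ∉ K} q_{j,g}(1)) diverges. Then the sequence is hollow: for every character α ≠ 1 of H and every j₀ ≥ 0, the l¹ norms ‖∏_{j=j₀}^{j₀+d} p_{α,j}‖₁ tend to 0 as d → ∞, where p_{α,j} := Σ_{g∈H} α(g⁻¹)·q_{j,g} ∈ ℂ[x,x⁻¹]. -/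

import Mathlib

open Finsupp Filter

/-- The coefficients of a real Laurent polynomial. -/
def lcoeff (p : AddMonoidAlgebra ℝ ℤ) : ℤ →₀ ℝ := p.coeff

/-- The coefficients of a complex Laurent polynomial. -/
def lcoeffC (p : AddMonoidAlgebra ℂ ℤ) : ℤ →₀ ℂ := p.coeff

/-- The `l¹` norm of a complex Laurent polynomial. -/
noncomputable def l1C (p : AddMonoidAlgebra ℂ ℤ) : ℝ := (lcoeffC p).sum fun _ c => ‖c‖

/-- Evaluation of a real Laurent polynomial at `x = 1`. -/
noncomputable def ev1 (p : AddMonoidAlgebra ℝ ℤ) : ℝ := (lcoeff p).sum fun _ c => c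

/-- A real Laurent polynomial viewed as a complex Laurent polynomial. -/
noncomputable def toC (p : AddMonoidAlgebra ℝ ℤ) : AddMonoidAlgebra ℂ ℤ :=
  AddMonoidAlgebra.ofCoeff (Finsupp.mapRange (fun r : ℝ => (r : ℂ)) Complex.ofReal_zero (lcoeff p))

/-!
Choose a maximal subgroup `K` containing `ker α`. As `|H|` is odd, `α` never takes the value
`-1`, so `|Re α g| ≤ ρ < 1` off `K`. Symmetry of `q` turns `p_{α,j}` into
`∑ g, Re (α g) • q_{j,g}`, hence `‖p_{α,j}‖₁ ≤ 1 - (1 - ρ) t_j ≤ exp (-(1 - ρ) t_j)`, where `t_j`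
is the mass of `q_j` off `K`. The `l¹` norm is submultiplicative and `∑ t_j` diverges.
-/

open Finset Complex ComplexConjugate

lemma l1C_nonneg (p : AddMonoidAlgebra ℂ ℤ) : 0 ≤ l1C p :=
  Finset.sum_nonneg fun _ _ => norm_nonneg _

lemma l1C_eq_sum_of_support_subset {p : AddMonoidAlgebra ℂ ℤ} {S : Finset ℤ}
    (h : (lcoeffC p).support ⊆ S) : l1C p = ∑ n ∈ S, ‖p.coeff n‖ :=
  Finsupp.sum_of_support_subset _ h _ fun _ _ => norm_zero

lemma l1C_single (a : ℤ) (c : ℂ) : l1C (AddMonoidAlgebra.single a c) = ‖c‖ :=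
  Finsupp.sum_single_index norm_zero

lemma l1C_one : l1C 1 = 1 := by
  rw [AddMonoidAlgebra.one_def, l1C_single, norm_one]

lemma l1C_add_le (p r : AddMonoidAlgebra ℂ ℤ) : l1C (p + r) ≤ l1C p + l1C r := by
  classical
  set S := (lcoeffC p).support ∪ (lcoeffC r).support
  rw [l1C_eq_sum_of_support_subset (S := S) (p := p + r) Finsupp.support_add,
    l1C_eq_sum_of_support_subset (S := S) subset_union_left,
    l1C_eq_sum_of_support_subset (S := S) subset_union_right, ← sum_add_distrib]
  exact sum_le_sum fun n _ => norm_add_le _ _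

lemma l1C_sum_le {ι : Type*} (s : Finset ι) (f : ι → AddMonoidAlgebra ℂ ℤ) :
    l1C (∑ i ∈ s, f i) ≤ ∑ i ∈ s, l1C (f i) :=
  le_sum_of_subadditive l1C (by simp [l1C, lcoeffC]) l1C_add_le s f

lemma l1C_smul (c : ℂ) (p : AddMonoidAlgebra ℂ ℤ) : l1C (c • p) = ‖c‖ * l1C p := by
  rw [l1C, l1C, lcoeffC, AddMonoidAlgebra.coeff_smul,
    Finsupp.sum_smul_index' fun _ => norm_zero, Finsupp.mul_sum]
  simp only [norm_smul]
  rfl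

lemma l1C_mul_le (p r : AddMonoidAlgebra ℂ ℤ) : l1C (p * r) ≤ l1C p * l1C r := by
  rw [AddMonoidAlgebra.mul_def, show l1C p * l1C r = ∑ a ∈ p.coeff.support,
    ∑ b ∈ r.coeff.support, ‖p.coeff a‖ * ‖r.coeff b‖ from sum_mul_sum _ _ _ _]
  refine (l1C_sum_le _ _).trans (sum_le_sum fun a _ => ?_)
  refine (l1C_sum_le _ _).trans (sum_le_sum fun b _ => ?_)
  rw [l1C_single, norm_mul]

lemma l1C_prod_le {ι : Type*} (s : Finset ι) (f : ι → AddMonoidAlgebra ℂ ℤ) :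
    l1C (∏ i ∈ s, f i) ≤ ∏ i ∈ s, l1C (f i) :=
  le_prod_of_submultiplicative_of_nonneg l1C l1C_nonneg l1C_one.le l1C_mul_le s f

lemma l1C_toC_of_nonneg {p : AddMonoidAlgebra ℝ ℤ} (hp : ∀ n, 0 ≤ lcoeff p n) :
    l1C (toC p) = ev1 p := by
  rw [l1C, toC, lcoeffC, AddMonoidAlgebra.coeff_ofCoeff,
    Finsupp.sum_mapRange_index fun _ => by simp, ev1]
  exact Finsupp.sum_congr fun n _ => by rw [norm_real, Real.norm_of_nonneg (hp n)]

lemma Complex.abs_re_lt_one_of_pow_eq_one {z : ℂ} {n : ℕ} (hn : Odd n) (hz : z ^ n = 1)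
    (hz1 : z ≠ 1) : |z.re| < 1 := by
  have hnorm : ‖z‖ = 1 := norm_eq_one_of_pow_eq_one hz hn.pos.ne'
  refine (abs_re_le_norm z).trans_eq hnorm |>.lt_of_ne fun h => ?_
  have hreal : z = z.re := ext rfl (abs_re_eq_norm.1 (h.trans hnorm.symm))
  rcases abs_eq zero_le_one |>.1 h with h1 | h1
  · exact hz1 (by rw [hreal, h1, ofReal_one])
  · rw [hreal, h1, ofReal_neg, ofReal_one, hn.neg_one_pow] at hz
    norm_num at hz

namespace MonoidHom

variable {G : Type*} [Group G] (α : G →* ℂ)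

lemma abs_re_lt_one_of_odd_card (hodd : Odd (Nat.card G)) {g : G} (hg : α g ≠ 1) :
    |(α g).re| < 1 :=
  abs_re_lt_one_of_pow_eq_one hodd (by rw [← map_pow, pow_card_eq_one', map_one]) hg

variable [Finite G]

lemma norm_apply_eq_one (g : G) : ‖α g‖ = 1 :=
  norm_eq_one_of_pow_eq_one (by rw [← map_pow, pow_card_eq_one', map_one]) Nat.card_pos.ne'

lemma apply_inv_eq_conj (g : G) : α g⁻¹ = conj (α g) := by
  rw [← inv_eq_conj (α.norm_apply_eq_one g)]
  exact eq_inv_of_mul_eq_one_left (by rw [← map_mul, inv_mul_cancel, map_one])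

lemma exists_abs_re_le_of_ker_le (hodd : Odd (Nat.card G)) {K : Subgroup G} (hK : α.ker ≤ K) :
    ∃ ρ < 1, ∀ g ∉ K, |(α g).re| ≤ ρ := by
  classical
  obtain ⟨g₀, hg₀⟩ := Finite.exists_max fun g => if g ∈ K then 0 else |(α g).re|
  refine ⟨_, ?_, fun g hg => by simpa [hg] using hg₀ g⟩
  split_ifs with hg
  · exact zero_lt_one
  · exact α.abs_re_lt_one_of_odd_card hodd fun h => hg (hK h)

end MonoidHom

lemma MonoidHom.sum_apply_inv_smul_eq_sum_re_smul {G M : Type*} [Group G] [Fintype G]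
    [AddCommGroup M] [Module ℂ M] (α : G →* ℂ) (X : G → M) (hX : ∀ g, X g⁻¹ = X g) :
    ∑ g, α g⁻¹ • X g = ∑ g, ((α g).re : ℂ) • X g := by
  have hswap : ∑ g, α g⁻¹ • X g = ∑ g, α g • X g :=
    Fintype.sum_equiv (Equiv.inv G) _ _ fun g => by simp [hX]
  calc ∑ g, α g⁻¹ • X g = (2 : ℂ)⁻¹ • ∑ g, (α g + α g⁻¹) • X g := by
        rw [sum_congr rfl fun g _ => add_smul _ _ _, sum_add_distrib, ← hswap, ← two_smul ℂ,
          smul_smul, inv_mul_cancel₀ two_ne_zero, one_smul]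
    _ = ∑ g, ((α g).re : ℂ) • X g := by
        simp_rw [re_eq_add_conj, ← α.apply_inv_eq_conj, Finset.smul_sum, smul_smul, div_eq_inv_mul]

lemma l1C_sum_apply_inv_smul_toC_le {G : Type*} [Group G] [Fintype G] (α : G →* ℂ)
    (q : G → AddMonoidAlgebra ℝ ℤ) (hpos : ∀ g n, 0 ≤ lcoeff (q g) n) (hsymm : ∀ g, q g = q g⁻¹) :
    l1C (∑ g, α g⁻¹ • toC (q g)) ≤ ∑ g, |(α g).re| * ev1 (q g) := by
  rw [α.sum_apply_inv_smul_eq_sum_re_smul _ fun g => by rw [← hsymm]]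
  refine (l1C_sum_le _ _).trans_eq (sum_congr rfl fun g _ => ?_)
  rw [l1C_smul, norm_real, Real.norm_eq_abs, l1C_toC_of_nonneg (hpos g)]

lemma sum_mul_le_exp_neg {ι : Type*} [Fintype ι] (p : ι → Prop) [DecidablePred p]
    {w e : ι → ℝ} {ρ : ℝ} (he : ∀ i, 0 ≤ e i) (he1 : ∑ i, e i = 1) (hw : ∀ i, w i ≤ 1)
    (hwρ : ∀ i, ¬ p i → w i ≤ ρ) :
    ∑ i, w i * e i ≤ Real.exp (-((1 - ρ) * ∑ i, if p i then 0 else e i)) :=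
  calc ∑ i, w i * e i ≤ ∑ i, (e i - (1 - ρ) * if p i then 0 else e i) := by
        refine sum_le_sum fun i _ => ?_
        split_ifs with hp
        · nlinarith [hw i, he i]
        · nlinarith [hwρ i hp, he i]
    _ = -((1 - ρ) * ∑ i, if p i then 0 else e i) + 1 := by
        rw [sum_sub_distrib, he1, ← Finset.mul_sum]; ring
    _ ≤ _ := Real.add_one_le_exp _

lemma tendsto_sum_Icc_atTop_of_not_summable {t : ℕ → ℝ} (ht : ∀ j, 0 ≤ t j)
    (hnot : ¬ Summable t) (j₀ : ℕ) :
    Tendsto (fun d => ∑ j ∈ Icc j₀ (j₀ + d), t j) atTop atTop := by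
  have hshift : ¬ Summable fun i => t (i + j₀) := (summable_nat_add_iff j₀).not.2 hnot
  have := (not_summable_iff_tendsto_nat_atTop_of_nonneg fun i => ht (i + j₀)).1 hshift
  refine (this.comp (tendsto_add_atTop_nat 1)).congr fun d => ?_
  rw [Function.comp_apply, ← Ico_add_one_right_eq_Icc, sum_Ico_eq_sum_range,
    show j₀ + d + 1 - j₀ = d + 1 by omega]
  simp only [add_comm]

lemma tendsto_prod_Icc_zero_of_le_exp_neg {a t : ℕ → ℝ} {c : ℝ} (hc : 0 < c) (ha : ∀ j, 0 ≤ a j)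
    (hat : ∀ j, a j ≤ Real.exp (-(c * t j))) (ht : ∀ j, 0 ≤ t j) (hnot : ¬ Summable t)
    (j₀ : ℕ) : Tendsto (fun d => ∏ j ∈ Icc j₀ (j₀ + d), a j) atTop (nhds 0) := by
  have hbound : ∀ d, ∏ j ∈ Icc j₀ (j₀ + d), a j ≤ Real.exp (-(c * ∑ j ∈ Icc j₀ (j₀ + d), t j)) :=
    fun d => by
      rw [Finset.mul_sum, ← sum_neg_distrib, Real.exp_sum]
      exact prod_le_prod (fun j _ => ha j) fun j _ => hat j
  refine squeeze_zero (fun d => prod_nonneg fun j _ => ha j) hbound ?_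
  exact Real.tendsto_exp_atBot.comp <| tendsto_neg_atTop_atBot.comp <|
    (tendsto_sum_Icc_atTop_of_not_summable ht hnot j₀).const_mul_atTop hc

open scoped Classical in
/-- Proposition 2.3 (final assertion): if `|H|` is odd, then every ergodic symmetric
sequence of hemicirculant coefficient families is hollow; here ergodicity is given in
the form of Lemma 1.1(iii): for every maximal proper subgroup `K` of `H` the series
`∑_j ∑_{g ∉ K} q_{j,g}(1)` diverges. -/
theorem odd_order_symmetric_hollow {H : Type} [CommGroup H] [Fintype H]
    (hodd : Odd (Fintype.card H))
    (q : ℕ → H → AddMonoidAlgebra ℝ ℤ)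
    (hpos : ∀ j g m, 0 ≤ lcoeff (q j g) m)
    (hsum : ∀ j, ∑ g, ev1 (q j g) = 1)
    (hsymm : ∀ j g, q j g = q j g⁻¹)
    (hdiv : ∀ K : Subgroup H, IsCoatom K →
      ¬ Summable (fun j => ∑ g, if g ∈ K then 0 else ev1 (q j g))) :
    ∀ α : H →* ℂ, α ≠ 1 → ∀ j₀ : ℕ,
      Tendsto
        (fun d => l1C (∏ j ∈ Finset.Icc j₀ (j₀ + d), ∑ g, α g⁻¹ • toC (q j g)))
        atTop (nhds 0) := by
  intro α hα j₀
  have hker : α.ker ≠ ⊤ := fun h =>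
    hα <| MonoidHom.ext fun g => α.mem_ker.1 (h ▸ Subgroup.mem_top g)
  obtain ⟨K, hK, hkerK⟩ := (eq_top_or_exists_le_coatom α.ker).resolve_left hker
  obtain ⟨ρ, hρ1, hρ⟩ :=
    α.exists_abs_re_le_of_ker_le (Nat.card_eq_fintype_card (α := H) ▸ hodd) hkerK
  have hev1 : ∀ j g, 0 ≤ ev1 (q j g) := fun j g => Finsupp.sum_nonneg fun n _ => hpos j g n
  have hstep : ∀ j, l1C (∑ g, α g⁻¹ • toC (q j g))
      ≤ Real.exp (-((1 - ρ) * ∑ g, if g ∈ K then 0 else ev1 (q j g))) := fun j =>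
    (l1C_sum_apply_inv_smul_toC_le α (q j) (hpos j) (hsymm j)).trans <|
      sum_mul_le_exp_neg (· ∈ K) (hev1 j) (hsum j)
        (fun g => (abs_re_le_norm _).trans_eq (α.norm_apply_eq_one g)) hρ
  exact squeeze_zero (fun d => l1C_nonneg _) (fun d => l1C_prod_le _ _) <|
    tendsto_prod_Icc_zero_of_le_exp_neg (sub_pos.2 hρ1) (fun j => l1C_nonneg _) hstep
      (fun j => Finset.sum_nonneg fun g _ => ite_nonneg le_rfl (hev1 j g)) (hdiv K hK) j₀
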